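/- arXiv:1605.03141 — 2 statements merged into one kernel-verified Lean document; each statement's English description precedes it below -/
import Mathlib

section
/- In the grid graph G = P_s □ P_t with s, t ≥ 2, if (u_i, v_j) and (u_g, v_h) are distinct vertices with i = g (and hence j ≠ h), then the set of distinctive vertices satisfies |D((u_i,v_j),(u_g,v_h))| ≥ 2s + t − 3. -/
/-!
Distances in a box product add up, so when the first coordinates agree, a vertex `(c, b)`
separates `(i, j)` from `(i, h)` exactly when `b` separates `j` from `h` in `P_t`. On a path the
only vertex equidistant from `j` and `h` is their midpoint, while `j` and `h` themselves separate,
so at least `max 2 (t - 1)` whole columns of `s` vertices are distinctive, and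
`s * max 2 (t - 1) ≥ 2s + t - 3` for `s ≥ 1`.
-/

open Finset

namespace SimpleGraph

section distinctive

variable {V : Type*} [Fintype V] (G : SimpleGraph V)

noncomputable def distinctive (x y : V) : Finset V := {z | G.dist x z ≠ G.dist y z}

variable {G}

lemma mem_distinctive {x y z : V} : z ∈ G.distinctive x y ↔ G.dist x z ≠ G.dist y z := by
  simp [distinctive]

lemma pair_subset_distinctive [DecidableEq V] {x y : V} (hxy : G.Reachable x y) (hne : x ≠ y) :
    {x, y} ⊆ G.distinctive x y := by
  have hpos : 0 < G.dist x y := hxy.pos_dist_of_ne hne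
  intro z hz
  rcases mem_insert.1 hz with rfl | hz
  · simpa [mem_distinctive, dist_comm] using hpos.ne
  · simpa [mem_singleton.1 hz, mem_distinctive] using hpos.ne'

end distinctive

section boxProd

variable {α β : Type*} {G : SimpleGraph α} {H : SimpleGraph β}

lemma dist_boxProd {x y : α × β} (h₁ : G.Reachable x.1 y.1) (h₂ : H.Reachable x.2 y.2) :
    (G □ H).dist x y = G.dist x.1 y.1 + H.dist x.2 y.2 := by
  have h := edist_boxProd (G := G) (H := H) x y
  rw [← h₁.coe_dist_eq_edist, ← h₂.coe_dist_eq_edist,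
    ← (reachable_boxProd.2 ⟨h₁, h₂⟩).coe_dist_eq_edist] at h
  exact_mod_cast h

lemma distinctive_boxProd_mk_left [Fintype α] [Fintype β] (hG : G.Preconnected)
    (hH : H.Preconnected) (a : α) (j h : β) :
    (G □ H).distinctive (a, j) (a, h) = univ ×ˢ H.distinctive j h := by
  ext ⟨c, b⟩
  simp [mem_distinctive, dist_boxProd (hG _ _) (hH _ _)]

end boxProd

section pathGraph

variable {n : ℕ}

lemma natAbs_sub_le_length_pathGraph {u v : Fin n} (p : (pathGraph n).Walk u v) :
    ((u : ℤ) - v).natAbs ≤ p.length := by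
  induction p with
  | nil => simp
  | cons hadj _ ih =>
    rw [pathGraph_adj] at hadj
    rw [Walk.length_cons]
    omega

lemma pathGraph_dist_le_of_val_add_eq {u v : Fin n} {k : ℕ} (huv : u.val + k = v.val) :
    (pathGraph n).dist u v ≤ k := by
  induction k generalizing v with
  | zero => simp [Fin.ext (by omega : u.val = v.val)]
  | succ k ih =>
    let w : Fin n := ⟨u + k, by omega⟩
    have hwv : (pathGraph n).Adj w v := by rw [pathGraph_adj]; grind
    calc (pathGraph n).dist u v ≤ (pathGraph n).dist u w + (pathGraph n).dist w v :=
          hwv.reachable.dist_triangle_right u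
      _ ≤ k + 1 := add_le_add (ih rfl) (dist_eq_one_iff_adj.2 hwv).le

lemma pathGraph_dist (u v : Fin n) : (pathGraph n).dist u v = ((u : ℤ) - v).natAbs := by
  apply le_antisymm
  · rcases le_total u v with huv | hvu
    · exact (pathGraph_dist_le_of_val_add_eq (k := v - u) (by omega)).trans_eq (by omega)
    · rw [dist_comm]
      exact (pathGraph_dist_le_of_val_add_eq (k := u - v) (by omega)).trans_eq (by omega)
  · obtain ⟨p, hp⟩ := (pathGraph_preconnected n u v).exists_walk_length_eq_dist
    exact hp ▸ natAbs_sub_le_length_pathGraph p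

lemma sub_one_le_card_distinctive_pathGraph {j h : Fin n} (hjh : j ≠ h) :
    n - 1 ≤ #((pathGraph n).distinctive j h) := by
  have hmid : #{b | ¬(pathGraph n).dist j b ≠ (pathGraph n).dist h b} ≤ 1 := by
    refine card_le_one.2 fun a ha b hb => ?_
    simp only [mem_filter, mem_univ, true_and, not_not, pathGraph_dist] at ha hb
    have : j.val ≠ h.val := Fin.val_ne_of_ne hjh
    exact Fin.ext (by omega)
  have hsplit := card_filter_add_card_filter_not (s := (univ : Finset (Fin n)))
    (fun b => (pathGraph n).dist j b ≠ (pathGraph n).dist h b)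
  rw [card_univ, Fintype.card_fin] at hsplit
  exact (Nat.sub_le_sub_left hmid n).trans (by unfold distinctive; omega)

end pathGraph

end SimpleGraph

open SimpleGraph

theorem grid_distinctive_same_row_general (s t : ℕ)
    (i : Fin s) (j h : Fin t) (hjh : j ≠ h) :
    2 * s + t - 3 ≤
      (Finset.univ.filter (fun z : Fin s × Fin t =>
        ((SimpleGraph.pathGraph s).boxProd (SimpleGraph.pathGraph t)).dist (i, j) z ≠
          ((SimpleGraph.pathGraph s).boxProd (SimpleGraph.pathGraph t)).dist (i, h) z)).card := by
  change 2 * s + t - 3 ≤ #((pathGraph s □ pathGraph t).distinctive (i, j) (i, h))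
  rw [distinctive_boxProd_mk_left (pathGraph_preconnected s) (pathGraph_preconnected t),
    card_product, card_univ, Fintype.card_fin]
  have hs : 0 < s := i.pos
  have h₂ : 2 ≤ #((pathGraph t).distinctive j h) := by
    simpa [hjh] using card_le_card (pair_subset_distinctive (pathGraph_preconnected t j h) hjh)
  have ht := sub_one_le_card_distinctive_pathGraph hjh
  rcases le_total t 3 with ht3 | ht3
  · calc 2 * s + t - 3 ≤ s * 2 := by omega
      _ ≤ _ := Nat.mul_le_mul_left s h₂
  · calc 2 * s + t - 3 = 2 * s + (t - 3) := by omega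
      _ ≤ 2 * s + s * (t - 3) := by gcongr; exact Nat.le_mul_of_pos_left _ hs
      _ = s * (t - 1) := by rw [show t - 1 = t - 3 + 2 by omega]; ring
      _ ≤ _ := Nat.mul_le_mul_left s ht

/-- In the grid graph `P_s □ P_t` (`s, t ≥ 2`), two distinct vertices lying in the same row
(i.e. with the same first coordinate) have at least `2s + t - 3` distinctive vertices. -/
theorem grid_distinctive_same_row (s t : ℕ) (hs : 2 ≤ s) (ht : 2 ≤ t)
    (i : Fin s) (j h : Fin t) (hjh : j ≠ h) :
    2 * s + t - 3 ≤
      (Finset.univ.filter (fun z : Fin s × Fin t =>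
        ((SimpleGraph.pathGraph s).boxProd (SimpleGraph.pathGraph t)).dist (i, j) z ≠
          ((SimpleGraph.pathGraph s).boxProd (SimpleGraph.pathGraph t)).dist (i, h) z)).card :=
  grid_distinctive_same_row_general s t i j h hjh
end

section
/- Let C_n be the cycle graph on n = 2q vertices with q ≥ 2. Then C_n has a k-resolving set if and only if k ≤ n − 2 = 2q − 2; moreover dim_k(C_n) = k + 1 for every k with 1 ≤ k ≤ q − 1, and dim_k(C_n) = k + 2 for every k with q ≤ k ≤ 2q − 2. -/
/-- A finset `S` of vertices is a `k`-resolving set for `G`: any two distinct vertices `u, w`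
have different distances to at least `k` vertices of `S`. -/
def IsKResolvingSet {V : Type*} [DecidableEq V] (G : SimpleGraph V) (k : ℕ) (S : Finset V) : Prop :=
  ∀ u w : V, u ≠ w → k ≤ (S.filter (fun v => G.dist u v ≠ G.dist w v)).card

/-! In `C_{2q}` a vertex `v` is equidistant from two distinct vertices `u, w` exactly when
`2v = u + w`, so at most two vertices fail to resolve a pair, and two such vertices are antipodal
(`v` and `v + q`). Hence every set `S` is `(|S| - 2)`-resolving, and `(|S| - 1)`-resolving when it
contains no antipodal pair. Conversely `x ∈ S` and `x + q` both fail to resolve `x - 1, x + 1`,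
which forces `|S| ≥ k + 1`, and `|S| ≥ k + 2` when `S` contains an antipodal pair. An
antipodal-free set has at most `q` elements, so for `k ≥ q` only the second case is possible. -/

open SimpleGraph Finset
open scoped Fin.NatCast

namespace SimpleGraph

variable {V : Type*} {G : SimpleGraph V}

lemma Walk.apply_le_apply_add_length (f : V → ℕ) (hf : ∀ a b, G.Adj a b → f b ≤ f a + 1)
    {u v : V} (p : G.Walk u v) : f v ≤ f u + p.length := by
  induction p with
  | nil => simp
  | cons h _ ih =>
    have := hf _ _ h
    rw [Walk.length_cons]
    omega

lemma Reachable.apply_le_apply_add_dist (f : V → ℕ)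
    (hf : ∀ a b, G.Adj a b → f b ≤ f a + 1) {u v : V} (h : G.Reachable u v) : f v ≤ f u + G.dist u v := by
  obtain ⟨p, hp⟩ := h.exists_walk_length_eq_dist
  exact hp ▸ p.apply_le_apply_add_length f hf

lemma card_filter_dist_ne_add_card_filter_dist_eq (u w : V) (S : Finset V) :
    #(S.filter fun v => G.dist u v ≠ G.dist w v) + #(S.filter fun v => G.dist u v = G.dist w v) =
      #S := by
  rw [add_comm]; exact card_filter_add_card_filter_not _

end SimpleGraph

section CyclicNorm

variable {n : ℕ}

def cyclicNorm (x : Fin n) : ℕ := min x.val (-x).val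

lemma cyclicNorm_neg (x : Fin n) : cyclicNorm (-x) = cyclicNorm x := by
  rw [cyclicNorm, cyclicNorm, neg_neg, min_comm]

variable [NeZero n]

lemma cyclicNorm_add_le (x y : Fin n) : cyclicNorm (x + y) ≤ cyclicNorm x + cyclicNorm y := by
  have := x.isLt; have := y.isLt
  simp only [cyclicNorm, Fin.val_neg, Fin.ext_iff, Fin.val_add_eq_ite, Fin.val_zero]
  split_ifs <;> omega

lemma cyclicNorm_eq_cyclicNorm_iff {x y : Fin n} :
    cyclicNorm x = cyclicNorm y ↔ x = y ∨ x = -y := by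
  have := x.isLt; have := y.isLt
  rw [eq_neg_iff_add_eq_zero]
  simp only [cyclicNorm, Fin.val_neg, Fin.ext_iff, Fin.val_add_eq_ite, Fin.val_zero]
  split_ifs <;> omega

lemma Fin.sub_one_ne_add_one (hn : 2 < n) (x : Fin n) : x - 1 ≠ x + 1 := by
  rw [sub_eq_add_neg, Ne, add_right_inj, neg_eq_iff_add_eq_zero, Fin.ext_iff, Fin.val_add_eq_ite,
    Fin.val_one', Nat.mod_eq_of_lt (by omega : 1 < n)]
  simp only [Fin.val_zero]
  split_ifs <;> simp
  omega

end CyclicNorm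

namespace SimpleGraph

variable {n : ℕ} [NeZero n]

lemma cycleGraph_dist_add_one_le (u : Fin n) : (cycleGraph n).dist u (u + 1) ≤ 1 := by
  rcases Nat.lt_or_ge 1 n with hn | hn
  · refine (dist_eq_one_iff_adj.mpr ?_).le
    rw [cycleGraph_adj', add_sub_cancel_left, Fin.val_one', Nat.mod_eq_of_lt hn]
    exact Or.inr rfl
  · have : Subsingleton (Fin n) := Fin.subsingleton_iff_le_one.mpr hn
    simp [Subsingleton.elim (u + 1) u]

lemma cycleGraph_dist_add_natCast_le (u : Fin n) (k : ℕ) :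
    (cycleGraph n).dist u (u + (k : Fin n)) ≤ k := by
  induction k with
  | zero => simp
  | succ k ih =>
    calc (cycleGraph n).dist u (u + ((k + 1 : ℕ) : Fin n))
        ≤ (cycleGraph n).dist u (u + (k : Fin n)) +
            (cycleGraph n).dist (u + (k : Fin n)) (u + (k : Fin n) + 1) := by
          push_cast
          rw [← add_assoc]
          exact (Connected.mk cycleGraph_preconnected).dist_triangle
      _ ≤ k + 1 := add_le_add ih (cycleGraph_dist_add_one_le _)

lemma cycleGraph_dist_le_val_sub (u v : Fin n) : (cycleGraph n).dist u v ≤ (v - u).val := by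
  simpa using cycleGraph_dist_add_natCast_le u (v - u).val

lemma cyclicNorm_le_cycleGraph_dist (u v : Fin n) :
    cyclicNorm (v - u) ≤ (cycleGraph n).dist u v := by
  have hstep (a b : Fin n) (h : (cycleGraph n).Adj a b) :
      cyclicNorm (b - u) ≤ cyclicNorm (a - u) + 1 := by
    have hab : cyclicNorm (b - a) ≤ 1 := by
      rw [cycleGraph_adj'] at h
      rcases h with h | h
      · rw [← cyclicNorm_neg, neg_sub]; exact h ▸ min_le_left _ _
      · exact h ▸ min_le_left _ _
    calc cyclicNorm (b - u) = cyclicNorm (a - u + (b - a)) := by rw [sub_add_sub_cancel']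
      _ ≤ cyclicNorm (a - u) + 1 := (cyclicNorm_add_le _ _).trans (add_le_add_right hab _)
  simpa [cyclicNorm] using
    (cycleGraph_preconnected u v).apply_le_apply_add_dist (fun x => cyclicNorm (x - u)) hstep

theorem cycleGraph_dist (u v : Fin n) : (cycleGraph n).dist u v = cyclicNorm (v - u) := by
  refine le_antisymm (le_min (cycleGraph_dist_le_val_sub u v) ?_)
    (cyclicNorm_le_cycleGraph_dist u v)
  rw [neg_sub, dist_comm]
  exact cycleGraph_dist_le_val_sub v u

theorem cycleGraph_dist_eq_dist_iff {u w v : Fin n} :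
    (cycleGraph n).dist u v = (cycleGraph n).dist w v ↔ u = w ∨ v + v = u + w := by
  rw [cycleGraph_dist, cycleGraph_dist, cyclicNorm_eq_cyclicNorm_iff, sub_right_inj, neg_sub,
    sub_eq_sub_iff_add_eq_add, add_comm w u]

end SimpleGraph

namespace IsKResolvingSet

variable {V : Type*} [DecidableEq V] {G : SimpleGraph V} {k : ℕ} {S T : Finset V}

lemma mono (hS : IsKResolvingSet G k S) (hST : S ⊆ T) : IsKResolvingSet G k T :=
  fun u w huw => (hS u w huw).trans (card_le_card (filter_subset_filter _ hST))

lemma add_card_filter_dist_eq_le (hS : IsKResolvingSet G k S) {u w : V} (huw : u ≠ w) :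
    k + #(S.filter fun v => G.dist u v = G.dist w v) ≤ #S := by
  have := G.card_filter_dist_ne_add_card_filter_dist_eq u w S
  have := hS u w huw
  omega

lemma of_card_filter_dist_eq_le (m : ℕ)
    (hm : ∀ u w, u ≠ w → #(S.filter fun v => G.dist u v = G.dist w v) ≤ m)
    (hk : k + m ≤ #S) :
    IsKResolvingSet G k S := by
  intro u w huw
  have := G.card_filter_dist_ne_add_card_filter_dist_eq u w S
  have := hm u w huw
  omega

lemma nonempty [Nontrivial V] (hS : IsKResolvingSet G k S) (hk : 1 ≤ k) : S.Nonempty := by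
  obtain ⟨u, w, huw⟩ := exists_pair_ne V
  exact card_pos.mp (hk.trans ((hS u w huw).trans (card_filter_le _ _)))

end IsKResolvingSet

section EvenCycle

variable {q : ℕ} [NeZero q]

lemma Fin.val_natCast_half : ((q : Fin (2 * q)) : ℕ) = q :=
  Fin.val_cast_of_lt (by have := NeZero.pos q; omega)

lemma Fin.natCast_half_add_self : (q : Fin (2 * q)) + q = 0 := by
  rw [← Nat.cast_add, ← two_mul, Fin.natCast_self]

lemma Fin.add_natCast_half_ne_self (x : Fin (2 * q)) : x + q ≠ x := by
  rw [Ne, add_eq_left, Fin.ext_iff, Fin.val_natCast_half]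
  exact NeZero.ne q

lemma Fin.eq_or_eq_add_natCast_half_of_add_self_eq {a b : Fin (2 * q)} (h : a + a = b + b) :
    b = a ∨ b = a + q := by
  have hz : (b - a) + (b - a) = 0 := by rw [sub_add_sub_comm, h, sub_self]
  have hlt := (b - a).isLt
  rw [Fin.ext_iff, Fin.val_add_eq_ite, Fin.val_zero] at hz
  rw [← sub_eq_zero, ← sub_eq_iff_eq_add', Fin.ext_iff, Fin.ext_iff, Fin.val_natCast_half,
    Fin.val_zero]
  split_ifs at hz <;> omega

def IsAntipodalFree (S : Finset (Fin (2 * q))) : Prop := ∀ x ∈ S, x + q ∉ S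

lemma IsAntipodalFree.card_le {S : Finset (Fin (2 * q))} (hS : IsAntipodalFree S) : #S ≤ q := by
  let T := S.map (Equiv.addRight (q : Fin (2 * q))).toEmbedding
  have hdisj : Disjoint S T := by
    rw [Finset.disjoint_left]
    intro y hy hyT
    obtain ⟨x, hx, rfl⟩ := mem_map.mp hyT
    exact hS x hx hy
  have := card_le_univ (S ∪ T)
  rw [card_union_of_disjoint hdisj, card_map, Fintype.card_fin] at this
  omega

lemma isAntipodalFree_Iic {a : Fin (2 * q)} (ha : a.val < q) : IsAntipodalFree (Iic a) := by
  intro x hx hxq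
  rw [mem_Iic, Fin.le_def] at hx hxq
  rw [Fin.val_add_eq_ite, Fin.val_natCast_half] at hxq
  split_ifs at hxq <;> omega

lemma eq_or_eq_add_natCast_of_dist_eq {u w a b : Fin (2 * q)} (huw : u ≠ w)
    (ha : (cycleGraph (2 * q)).dist u a = (cycleGraph (2 * q)).dist w a)
    (hb : (cycleGraph (2 * q)).dist u b = (cycleGraph (2 * q)).dist w b) :
    b = a ∨ b = a + q := by
  rw [cycleGraph_dist_eq_dist_iff, or_iff_right huw] at ha hb
  exact Fin.eq_or_eq_add_natCast_half_of_add_self_eq (ha.trans hb.symm)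

lemma card_filter_cycleGraph_dist_eq_le_two {u w : Fin (2 * q)} (huw : u ≠ w)
    (S : Finset (Fin (2 * q))) :
    #(S.filter fun v => (cycleGraph (2 * q)).dist u v = (cycleGraph (2 * q)).dist w v) ≤ 2 := by
  obtain hE | ⟨a, ha⟩ := (S.filter fun v => (cycleGraph (2 * q)).dist u v =
    (cycleGraph (2 * q)).dist w v).eq_empty_or_nonempty
  · simp [hE]
  · refine (card_le_card fun b hb => ?_).trans (card_le_two (a := a) (b := a + q))
    rcases eq_or_eq_add_natCast_of_dist_eq huw (mem_filter.mp ha).2 (mem_filter.mp hb).2 with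
      rfl | rfl <;> simp

lemma IsAntipodalFree.card_filter_cycleGraph_dist_eq_le_one {S : Finset (Fin (2 * q))}
    (hS : IsAntipodalFree S) {u w : Fin (2 * q)} (huw : u ≠ w) :
    #(S.filter fun v => (cycleGraph (2 * q)).dist u v = (cycleGraph (2 * q)).dist w v) ≤ 1 := by
  refine card_le_one.mpr fun a ha b hb => ?_
  rw [mem_filter] at ha hb
  rcases eq_or_eq_add_natCast_of_dist_eq huw ha.2 hb.2 with h | rfl
  · exact h.symm
  · exact absurd hb.1 (hS a ha.1)

lemma isKResolvingSet_of_add_two_le_card {k : ℕ} {S : Finset (Fin (2 * q))} (h : k + 2 ≤ #S) :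
    IsKResolvingSet (cycleGraph (2 * q)) k S :=
  .of_card_filter_dist_eq_le 2 (fun _ _ huw => card_filter_cycleGraph_dist_eq_le_two huw S) h

lemma IsAntipodalFree.isKResolvingSet {k : ℕ} {S : Finset (Fin (2 * q))}
    (hS : IsAntipodalFree S) (h : k + 1 ≤ #S) : IsKResolvingSet (cycleGraph (2 * q)) k S :=
  .of_card_filter_dist_eq_le 1 (fun _ _ => hS.card_filter_cycleGraph_dist_eq_le_one) h

lemma cycleGraph_dist_sub_one_eq_dist_add_one {x y : Fin (2 * q)} (hy : y = x ∨ y = x + q) :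
    (cycleGraph (2 * q)).dist (x - 1) y = (cycleGraph (2 * q)).dist (x + 1) y := by
  refine cycleGraph_dist_eq_dist_iff.mpr (Or.inr ?_)
  rcases hy with rfl | rfl
  · abel
  · calc x + q + (x + q) = x + x + (q + q) := by abel
      _ = x - 1 + (x + 1) := by rw [Fin.natCast_half_add_self]; abel

lemma IsKResolvingSet.add_one_le_card (hq : 2 ≤ q) {k : ℕ} {S : Finset (Fin (2 * q))}
    (hS : IsKResolvingSet (cycleGraph (2 * q)) k S) {x : Fin (2 * q)} (hx : x ∈ S) :
    k + 1 ≤ #S := by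
  have hx' : x ∈ S.filter fun v =>
      (cycleGraph (2 * q)).dist (x - 1) v = (cycleGraph (2 * q)).dist (x + 1) v :=
    mem_filter.mpr ⟨hx, cycleGraph_dist_sub_one_eq_dist_add_one (Or.inl rfl)⟩
  have := card_pos.mpr ⟨x, hx'⟩
  have := hS.add_card_filter_dist_eq_le (Fin.sub_one_ne_add_one (by omega) x)
  omega

lemma IsKResolvingSet.add_one_le_card_of_one_le (hq : 2 ≤ q) {k : ℕ} (hk : 1 ≤ k)
    {S : Finset (Fin (2 * q))} (hS : IsKResolvingSet (cycleGraph (2 * q)) k S) : k + 1 ≤ #S := by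
  have : Nontrivial (Fin (2 * q)) := Fin.nontrivial_iff_two_le.mpr (by omega)
  obtain ⟨x, hx⟩ := hS.nonempty hk
  exact hS.add_one_le_card hq hx

lemma IsKResolvingSet.add_two_le_card (hq : 2 ≤ q) {k : ℕ} {S : Finset (Fin (2 * q))}
    (hS : IsKResolvingSet (cycleGraph (2 * q)) k S) {x : Fin (2 * q)} (hx : x ∈ S)
    (hxq : x + q ∈ S) : k + 2 ≤ #S := by
  have hpair : {x + q, x} ⊆ S.filter fun v =>
      (cycleGraph (2 * q)).dist (x - 1) v = (cycleGraph (2 * q)).dist (x + 1) v := by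
    intro y hy
    rw [mem_insert, mem_singleton] at hy
    refine mem_filter.mpr ⟨?_, cycleGraph_dist_sub_one_eq_dist_add_one hy.symm⟩
    rcases hy with rfl | rfl <;> assumption
  have := card_le_card hpair
  rw [card_pair (Fin.add_natCast_half_ne_self x)] at this
  have := hS.add_card_filter_dist_eq_le (Fin.sub_one_ne_add_one (by omega) x)
  omega

lemma IsKResolvingSet.add_two_le_card_of_le (hq : 2 ≤ q) {k : ℕ} (hk : q ≤ k)
    {S : Finset (Fin (2 * q))} (hS : IsKResolvingSet (cycleGraph (2 * q)) k S) : k + 2 ≤ #S := by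
  by_cases hfree : IsAntipodalFree S
  · have := hS.add_one_le_card_of_one_le hq (by omega)
    have := hfree.card_le
    omega
  · simp only [IsAntipodalFree, not_forall, not_not] at hfree
    obtain ⟨x, hx, hxq⟩ := hfree
    exact hS.add_two_le_card hq hx hxq

end EvenCycle

/-- The even cycle `C_n` with `n = 2q`, `q ≥ 2`, has a `k`-resolving set if and only if
`k ≤ n - 2 = 2q - 2`; moreover its `k`-metric dimension (least size of a `k`-resolving set)
is `k + 1` for `1 ≤ k ≤ q - 1` and `k + 2` for `q ≤ k ≤ 2q - 2`. -/
theorem evenCycle_kMetricDimension (q : ℕ) (hq : 2 ≤ q) :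
    (∀ k : ℕ, (∃ S : Finset (Fin (2 * q)),
        IsKResolvingSet (SimpleGraph.cycleGraph (2 * q)) k S) ↔ k ≤ 2 * q - 2) ∧
    (∀ k : ℕ, 1 ≤ k → k ≤ q - 1 →
      sInf {m : ℕ | ∃ S : Finset (Fin (2 * q)),
        IsKResolvingSet (SimpleGraph.cycleGraph (2 * q)) k S ∧ S.card = m} = k + 1) ∧
    ∀ k : ℕ, q ≤ k → k ≤ 2 * q - 2 →
      sInf {m : ℕ | ∃ S : Finset (Fin (2 * q)),
        IsKResolvingSet (SimpleGraph.cycleGraph (2 * q)) k S ∧ S.card = m} = k + 2 := by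
  have : NeZero q := ⟨by omega⟩
  refine ⟨fun k => ⟨?_, fun hk => ⟨univ, ?_⟩⟩, fun k hk1 hkq => ?_, fun k hkq hk2 => ?_⟩
  · rintro ⟨S, hS⟩
    have := (hS.mono (subset_univ S)).add_two_le_card hq (mem_univ 0) (mem_univ _)
    rw [card_univ, Fintype.card_fin] at this
    omega
  · exact isKResolvingSet_of_add_two_le_card (by rw [card_univ, Fintype.card_fin]; omega)
  · refine IsLeast.csInf_eq ⟨⟨Iic ⟨k, by omega⟩, ?_, Fin.card_Iic _⟩, ?_⟩
    · exact (isAntipodalFree_Iic (by simp only; omega)).isKResolvingSet (by rw [Fin.card_Iic])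
    · rintro m ⟨S, hS, rfl⟩
      exact hS.add_one_le_card_of_one_le hq hk1
  · refine IsLeast.csInf_eq ⟨⟨Iic ⟨k + 1, by omega⟩, ?_, Fin.card_Iic _⟩, ?_⟩
    · exact isKResolvingSet_of_add_two_le_card (by rw [Fin.card_Iic])
    · rintro m ⟨S, hS, rfl⟩
      exact hS.add_two_le_card_of_le hq hkq
end
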